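/- Let (X,Y) be random vectors of i.i.d. pairs and (U,V) quantized versions with E[(1/n)∑(Xᵢ-Uᵢ)²] ≤ D₁, E[(1/n)∑(Yᵢ-Vᵢ)²] ≤ D₂, where each Xᵢ, Yᵢ has zero mean and unit variance. Then E|(1/n)∑XᵢYᵢ - (1/n)∑UᵢVᵢ| ≤ √D₁ + √D₂ + √(D₁D₂). -/

import Mathlib

open MeasureTheory

/-! Since `x y - u v = x (y - v) + (x - u) y - (x - u) (y - v)`, Cauchy–Schwarz over the index
bounds the perturbation pointwise by three products `√A √B` of empirical second moments, and
Cauchy–Schwarz for integrals gives `E[√A √B] ≤ √(E A) √(E B)`. Unit variances make the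
expected empirical second moments of `X` and `Y` at most `1`, and the distortion constraints
bound those of `X - U` and `Y - V` by `D₁` and `D₂`. -/

section FiniteSums

variable {ι : Type*} (s : Finset ι) {c : ℝ}

lemma abs_mul_sum_mul_le_sqrt_mul_sqrt (hc : 0 ≤ c) (f g : ι → ℝ) :
    |c * ∑ i ∈ s, f i * g i| ≤ √(c * ∑ i ∈ s, f i ^ 2) * √(c * ∑ i ∈ s, g i ^ 2) := by
  have hcs := Finset.sum_mul_sq_le_sq_mul_sq s f g
  calc |c * ∑ i ∈ s, f i * g i| = √((c * ∑ i ∈ s, f i * g i) ^ 2) :=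
      (Real.sqrt_sq_eq_abs _).symm
    _ ≤ √((c * ∑ i ∈ s, f i ^ 2) * (c * ∑ i ∈ s, g i ^ 2)) := by
      gcongr
      nlinarith [mul_le_mul_of_nonneg_left hcs (sq_nonneg c)]
    _ = _ := Real.sqrt_mul (mul_nonneg hc (Finset.sum_nonneg fun i _ => sq_nonneg _)) _

lemma abs_mul_sum_mul_sub_mul_sum_mul_le (hc : 0 ≤ c) (x y u v : ι → ℝ) :
    |c * ∑ i ∈ s, x i * y i - c * ∑ i ∈ s, u i * v i| ≤
      √(c * ∑ i ∈ s, x i ^ 2) * √(c * ∑ i ∈ s, (y i - v i) ^ 2) +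
      √(c * ∑ i ∈ s, (x i - u i) ^ 2) * √(c * ∑ i ∈ s, y i ^ 2) +
      √(c * ∑ i ∈ s, (x i - u i) ^ 2) * √(c * ∑ i ∈ s, (y i - v i) ^ 2) := by
  have hsplit : c * ∑ i ∈ s, x i * y i - c * ∑ i ∈ s, u i * v i =
      c * ∑ i ∈ s, x i * (y i - v i) + c * ∑ i ∈ s, (x i - u i) * y i -
        c * ∑ i ∈ s, (x i - u i) * (y i - v i) := by
    simp only [← mul_sub, ← mul_add, ← Finset.sum_sub_distrib, ← Finset.sum_add_distrib]
    congr 1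
    exact Finset.sum_congr rfl fun i _ => by ring
  rw [hsplit]
  refine (abs_sub _ _).trans (add_le_add ((abs_add_le _ _).trans (add_le_add ?_ ?_)) ?_) <;>
    exact abs_mul_sum_mul_le_sqrt_mul_sqrt s hc _ _

end FiniteSums

section CauchySchwarz

variable {Ω : Type*} [MeasurableSpace Ω] {μ : Measure Ω} {a b : Ω → ℝ}

lemma memLp_two_sqrt (ha : Integrable a μ) (ha0 : 0 ≤ a) : MemLp (fun ω => √(a ω)) 2 μ :=
  (memLp_two_iff_integrable_sq (Real.continuous_sqrt.comp_aestronglyMeasurable ha.1)).2 <|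
    ha.congr (ae_of_all _ fun ω => (Real.sq_sqrt (ha0 ω)).symm)

lemma integrable_sqrt_mul_sqrt (ha : Integrable a μ) (hb : Integrable b μ) (ha0 : 0 ≤ a)
    (hb0 : 0 ≤ b) : Integrable (fun ω => √(a ω) * √(b ω)) μ :=
  (memLp_two_sqrt ha ha0).integrable_mul (memLp_two_sqrt hb hb0)

lemma integral_sqrt_mul_sqrt_le (ha : Integrable a μ) (hb : Integrable b μ) (ha0 : 0 ≤ a)
    (hb0 : 0 ≤ b) : ∫ ω, √(a ω) * √(b ω) ∂μ ≤ √(∫ ω, a ω ∂μ) * √(∫ ω, b ω ∂μ) := by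
  have := integral_mul_le_Lp_mul_Lq_of_nonneg Real.HolderConjugate.two_two
    (ae_of_all _ fun ω => Real.sqrt_nonneg (a ω)) (ae_of_all _ fun ω => Real.sqrt_nonneg (b ω))
    (by simpa using memLp_two_sqrt ha ha0) (by simpa using memLp_two_sqrt hb hb0)
  simpa only [Real.rpow_two, Real.sq_sqrt (ha0 _), Real.sq_sqrt (hb0 _), ← Real.sqrt_eq_rpow]
    using this

end CauchySchwarz

section EmpiricalMoments

variable {ι Ω : Type*} [Fintype ι] [MeasurableSpace Ω] {μ : Measure Ω}

lemma integrable_mul_sum_sq (c : ℝ) {f : ι → Ω → ℝ} (hf : ∀ i, MemLp (f i) 2 μ) :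
    Integrable (fun ω => c * ∑ i, f i ω ^ 2) μ :=
  (integrable_finsetSum _ fun i _ => (hf i).integrable_sq).const_mul c

lemma integral_abs_mul_sum_mul_sub_mul_sum_mul_le {c : ℝ} (hc : 0 ≤ c) {x y u v : ι → Ω → ℝ}
    (hx : ∀ i, MemLp (x i) 2 μ) (hy : ∀ i, MemLp (y i) 2 μ)
    (hu : ∀ i, MemLp (u i) 2 μ) (hv : ∀ i, MemLp (v i) 2 μ) :
    ∫ ω, |c * ∑ i, x i ω * y i ω - c * ∑ i, u i ω * v i ω| ∂μ ≤
      √(∫ ω, c * ∑ i, x i ω ^ 2 ∂μ) * √(∫ ω, c * ∑ i, (y i ω - v i ω) ^ 2 ∂μ) +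
      √(∫ ω, c * ∑ i, (x i ω - u i ω) ^ 2 ∂μ) * √(∫ ω, c * ∑ i, y i ω ^ 2 ∂μ) +
      √(∫ ω, c * ∑ i, (x i ω - u i ω) ^ 2 ∂μ) *
        √(∫ ω, c * ∑ i, (y i ω - v i ω) ^ 2 ∂μ) := by
  have hA := integrable_mul_sum_sq c hx
  have hQ := integrable_mul_sum_sq c hy
  have hC := integrable_mul_sum_sq c fun i => (hx i).sub (hu i)
  have hB := integrable_mul_sum_sq c fun i => (hy i).sub (hv i)
  have hnn (f : ι → Ω → ℝ) : 0 ≤ fun ω => c * ∑ i, f i ω ^ 2 := fun ω => by positivity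
  have hAB := integrable_sqrt_mul_sqrt hA hB (hnn _) (hnn _)
  have hCQ := integrable_sqrt_mul_sqrt hC hQ (hnn _) (hnn _)
  have hCB := integrable_sqrt_mul_sqrt hC hB (hnn _) (hnn _)
  refine (integral_mono_of_nonneg (ae_of_all _ fun ω => abs_nonneg _) ((hAB.add hCQ).add hCB)
    (ae_of_all _ fun ω => abs_mul_sum_mul_sub_mul_sum_mul_le _ hc _ _ _ _)).trans ?_
  rw [integral_add' (hAB.add hCQ) hCB, integral_add' hAB hCQ]
  gcongr <;> exact integral_sqrt_mul_sqrt_le ‹_› ‹_› (hnn _) (hnn _)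

lemma integral_inv_mul_sum_sq_le_one {n : ℕ} {f : Fin n → Ω → ℝ} (hf : ∀ i, MemLp (f i) 2 μ)
    (hvar : ∀ i, ∫ ω, f i ω ^ 2 ∂μ = 1) : ∫ ω, (1 / (n : ℝ)) * ∑ i, f i ω ^ 2 ∂μ ≤ 1 := by
  rw [integral_const_mul, integral_finsetSum _ fun i _ => (hf i).integrable_sq]
  simp only [one_div, hvar, Finset.sum_const, Finset.card_univ, Fintype.card_fin, nsmul_eq_mul,
    mul_one]
  exact inv_mul_le_one

end EmpiricalMoments

theorem expected_correlation_perturbation_general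
    {Ω : Type*} [MeasurableSpace Ω] (P : Measure Ω)
    (n : ℕ) (X Y U V : Fin n → Ω → ℝ)
    (hX2 : ∀ i, MemLp (X i) 2 P) (hY2 : ∀ i, MemLp (Y i) 2 P)
    (hU2 : ∀ i, MemLp (U i) 2 P) (hV2 : ∀ i, MemLp (V i) 2 P)
    (hXvar : ∀ i, ∫ ω, (X i ω) ^ 2 ∂P = 1) (hYvar : ∀ i, ∫ ω, (Y i ω) ^ 2 ∂P = 1)
    (D₁ D₂ : ℝ)
    (hD₁ : ∫ ω, (1 / (n:ℝ)) * ∑ i, (X i ω - U i ω) ^ 2 ∂P ≤ D₁)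
    (hD₂ : ∫ ω, (1 / (n:ℝ)) * ∑ i, (Y i ω - V i ω) ^ 2 ∂P ≤ D₂) :
    ∫ ω, |(1 / (n:ℝ)) * ∑ i, X i ω * Y i ω - (1 / (n:ℝ)) * ∑ i, U i ω * V i ω| ∂P
      ≤ Real.sqrt D₁ + Real.sqrt D₂ + Real.sqrt (D₁ * D₂) := by
  have hc : (0 : ℝ) ≤ 1 / n := by positivity
  have hD₂_nonneg : 0 ≤ D₂ := (integral_nonneg fun ω => by positivity).trans hD₂
  have hX := Real.sqrt_le_one.mpr (integral_inv_mul_sum_sq_le_one hX2 hXvar)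
  have hY := Real.sqrt_le_one.mpr (integral_inv_mul_sum_sq_le_one hY2 hYvar)
  calc _ ≤ _ := integral_abs_mul_sum_mul_sub_mul_sum_mul_le hc hX2 hY2 hU2 hV2
    _ ≤ 1 * √D₂ + √D₁ * 1 + √D₁ * √D₂ := by gcongr
    _ = _ := by rw [Real.sqrt_mul' D₁ hD₂_nonneg]; ring

/-- expected sample-correlation perturbation bound (Theorem 2 of the
paper). `(Xᵢ,Yᵢ)` are i.i.d. with zero means and unit variances, and `Uᵢ, Vᵢ` are
quantized versions satisfying expected-distortion constraints `D₁, D₂`. -/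
theorem expected_correlation_perturbation
    {Ω : Type*} [MeasurableSpace Ω] (P : Measure Ω) [IsProbabilityMeasure P]
    (n : ℕ) (hn : 0 < n) (X Y U V : Fin n → Ω → ℝ)
    (hX2 : ∀ i, MemLp (X i) 2 P) (hY2 : ∀ i, MemLp (Y i) 2 P)
    (hU2 : ∀ i, MemLp (U i) 2 P) (hV2 : ∀ i, MemLp (V i) 2 P)
    (hiid : ∀ i j, Measure.map (fun ω => (X i ω, Y i ω)) P
              = Measure.map (fun ω => (X j ω, Y j ω)) P)
    (hXmean : ∀ i, ∫ ω, X i ω ∂P = 0) (hYmean : ∀ i, ∫ ω, Y i ω ∂P = 0)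
    (hXvar : ∀ i, ∫ ω, (X i ω) ^ 2 ∂P = 1) (hYvar : ∀ i, ∫ ω, (Y i ω) ^ 2 ∂P = 1)
    (D₁ D₂ : ℝ)
    (hD₁ : ∫ ω, (1 / (n:ℝ)) * ∑ i, (X i ω - U i ω) ^ 2 ∂P ≤ D₁)
    (hD₂ : ∫ ω, (1 / (n:ℝ)) * ∑ i, (Y i ω - V i ω) ^ 2 ∂P ≤ D₂) :
    ∫ ω, |(1 / (n:ℝ)) * ∑ i, X i ω * Y i ω - (1 / (n:ℝ)) * ∑ i, U i ω * V i ω| ∂P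
      ≤ Real.sqrt D₁ + Real.sqrt D₂ + Real.sqrt (D₁ * D₂) :=
  expected_correlation_perturbation_general P n X Y U V hX2 hY2 hU2 hV2 hXvar hYvar D₁ D₂ hD₁ hD₂
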